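/- Let (X,d) be a geodesic metric space and suppose there is a number D>0 and for every pair of points x,y ∈ X a continuous path η(x,y):[0,1]→X with η(x,y)(0)=x and η(x,y)(1)=y such that: (1) if d(x,y) ≤ 1 then the diameter of η(x,y)([0,1]) is at most D; (2) for all 0 ≤ s ≤ t ≤ 1 the Hausdorff distance between η(x,y)([s,t]) and η(η(x,y)(s), η(x,y)(t))([0,1]) is at most D; (3) for all x,y,z ∈ X, the set η(x,y)([0,1]) is contained in the D-neighborhood of η(x,z)([0,1]) ∪ η(z,y)([0,1]). Then (X,d) is δ-hyperbolic for a number δ>0 depending only on D. -/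

import Mathlib

/-- `c` restricted to `[a,b]` is a geodesic (an isometric embedding of the interval). -/
def IsGeodesicOn {X : Type*} [MetricSpace X] (c : ℝ → X) (a b : ℝ) : Prop :=
  ∀ s ∈ Set.Icc a b, ∀ t ∈ Set.Icc a b, dist (c s) (c t) = |s - t|

/-- A geodesic metric space: any two points are joined by a geodesic. -/
def GeodesicSpace (X : Type*) [MetricSpace X] : Prop :=
  ∀ x y : X, ∃ c : ℝ → X, c 0 = x ∧ c (dist x y) = y ∧ IsGeodesicOn c 0 (dist x y)

/-- The `δ`-thin triangle condition: for every geodesic triangle with sides `a`, `b`, `c`,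
the side `c` is contained in the `δ`-neighborhood of `a ∪ b`. -/
def ThinTriangles (X : Type*) [MetricSpace X] (δ : ℝ) : Prop :=
  ∀ x y z : X, ∀ a b c : ℝ → X,
    (a 0 = y ∧ a (dist y z) = z ∧ IsGeodesicOn a 0 (dist y z)) →
    (b 0 = z ∧ b (dist z x) = x ∧ IsGeodesicOn b 0 (dist z x)) →
    (c 0 = x ∧ c (dist x y) = y ∧ IsGeodesicOn c 0 (dist x y)) →
    ∀ p ∈ c '' Set.Icc 0 (dist x y),
      Metric.infDist p ((a '' Set.Icc 0 (dist y z)) ∪ (b '' Set.Icc 0 (dist z x))) ≤ δ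

/-!
The η-paths behave like quasi-geodesics. Bisecting a 1-Lipschitz curve of length `2 ^ k` and
applying (3) at every level shows that the η-path between its endpoints stays `D (k + 1)`-close
to it. Let `p` be a point of `η x y` farthest from a geodesic `[x, y]`, at distance `H`. The
intermediate value theorem for `dist · x - dist · y` gives points of `η x y` before and after
`p` that are `2H`-close to points of `[x, y]` at most `10H` from the projection of `p`. By (2),
`p` is `D`-close to the η-path joining them, hence `D (log H + O(1))`-close to a broken line
through these four points, all of which are at least `H` away from `p`. Thus `H = O(D²)`; the
same intermediate value argument puts `[x, y]` within `O(D²)` of `η x y`, and thin η-triangles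
become thin geodesic triangles.
-/

open Metric Set

section PseudoMetric
variable {X : Type*} [PseudoMetricSpace X]

theorem mem_cthickening_iff_infDist_le {s : Set X} {x : X} {r : ℝ} (hs : s.Nonempty)
    (hr : 0 ≤ r) : x ∈ cthickening r s ↔ infDist x s ≤ r :=
  ENNReal.le_ofReal_iff_toReal_le (infEDist_ne_top hs) hr

theorem subset_cthickening_of_hausdorffDist_le {s t : Set X} {r : ℝ}
    (hs : Bornology.IsBounded s) (ht : Bornology.IsBounded t) (ht₀ : t.Nonempty)
    (hst : hausdorffDist s t ≤ r) : s ⊆ cthickening r t := fun x hx =>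
  (mem_cthickening_iff_infDist_le ht₀ (hausdorffDist_nonneg.trans hst)).2 <|
    (infDist_le_hausdorffDist_of_mem hx
      (hausdorffEDist_ne_top_of_nonempty_of_bounded ⟨x, hx⟩ ht₀ hs ht)).trans hst

theorem subset_cthickening_union_of_subset {s t u t' u' : Set X} {ε δ : ℝ} (hε : 0 ≤ ε)
    (hδ : 0 ≤ δ) (hs : s ⊆ cthickening ε (t ∪ u)) (ht : t ⊆ cthickening δ t')
    (hu : u ⊆ cthickening δ u') :
    s ⊆ cthickening (ε + δ) (t' ∪ u') := by
  refine hs.trans <| (cthickening_subset_of_subset ε ?_).trans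
    (cthickening_cthickening_subset hε hδ _)
  rw [cthickening_union]
  exact union_subset_union ht hu

end PseudoMetric

theorem image_comp_const_sub_Icc {α : Type*} (f : ℝ → α) (L : ℝ) :
    (fun s => f (L - s)) '' Icc 0 L = f '' Icc 0 L := by
  rw [← image_image f (L - ·), image_const_sub_Icc, sub_zero, sub_self]

theorem add_five_sq_le_mul_two_pow (m : ℕ) : (m + 5) ^ 2 ≤ 36 * 2 ^ m := by
  induction m with
  | zero => norm_num
  | succ m ih =>
    calc (m + 1 + 5) ^ 2 ≤ 2 * (m + 5) ^ 2 := by ring_nf; omega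
      _ ≤ 36 * 2 ^ (m + 1) := by rw [pow_succ 2 m]; omega

theorem le_mul_sq_of_forall_two_pow {H h : ℝ} (hh : 1 ≤ h)
    (hH : ∀ k : ℕ, 20 * H ≤ 2 ^ k → H ≤ h * (k + 4)) : H ≤ 720 * h ^ 2 := by
  rcases lt_or_ge (20 * H) 1 with hsmall | hbig
  · have := hH 0 (by simpa using hsmall.le)
    nlinarith
  obtain ⟨m, hm, hm'⟩ := exists_nat_pow_near hbig one_lt_two
  have hHm : H ≤ h * (m + 5) := by
    have := hH (m + 1) hm'.le
    push_cast at this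
    linarith
  have hsq : ((m : ℝ) + 5) ^ 2 ≤ 36 * 2 ^ m := by exact_mod_cast add_five_sq_le_mul_two_pow m
  have hm5 : (m : ℝ) + 5 ≤ 720 * h := by nlinarith
  nlinarith

namespace IsGeodesicOn
variable {X : Type*} [MetricSpace X] {c : ℝ → X} {L : ℝ}

theorem lipschitzOnWith {a b : ℝ} (hc : IsGeodesicOn c a b) : LipschitzOnWith 1 c (Icc a b) :=
  LipschitzOnWith.of_dist_le_mul fun s hs t ht => by simp [hc s hs t ht, Real.dist_eq]

theorem dist_left (hc : IsGeodesicOn c 0 L) {s : ℝ} (hs : s ∈ Icc 0 L) :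
    dist (c s) (c 0) = s := by
  rw [hc s hs 0 ⟨le_rfl, hs.1.trans hs.2⟩, sub_zero, abs_of_nonneg hs.1]

theorem dist_right (hc : IsGeodesicOn c 0 L) {s : ℝ} (hs : s ∈ Icc 0 L) :
    dist (c s) (c L) = L - s := by
  rw [hc s hs L ⟨hs.1.trans hs.2, le_rfl⟩, abs_sub_comm, abs_of_nonneg (sub_nonneg.2 hs.2)]

theorem reverse (hc : IsGeodesicOn c 0 L) : IsGeodesicOn (fun s => c (L - s)) 0 L := by
  intro s hs t ht
  rw [hc _ ⟨by linarith [hs.2], by linarith [hs.1]⟩ _ ⟨by linarith [ht.2], by linarith [ht.1]⟩,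
    abs_sub_comm]
  ring_nf

theorem dist_le_two_mul_dist (hc : IsGeodesicOn c 0 L) {q : X} {σ τ : ℝ} (hσ : σ ∈ Icc 0 L)
    (hτ : τ ∈ Icc 0 L) (hq : dist q (c 0) - dist q (c L) = 2 * τ - L) :
    dist q (c τ) ≤ 2 * dist q (c σ) := by
  have h₀ := abs_dist_sub_le q (c σ) (c 0)
  have h₁ := abs_dist_sub_le q (c σ) (c L)
  rw [hc.dist_left hσ] at h₀
  rw [hc.dist_right hσ] at h₁
  have hστ : |σ - τ| ≤ dist q (c σ) := by
    rw [abs_le] at h₀ h₁ ⊢; constructor <;> linarith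
  calc dist q (c τ) ≤ dist q (c σ) + dist (c σ) (c τ) := dist_triangle _ _ _
    _ ≤ 2 * dist q (c σ) := by rw [hc σ hσ τ hτ]; linarith

theorem isCompact_image (hc : IsGeodesicOn c 0 L) : IsCompact (c '' Icc 0 L) :=
  isCompact_Icc.image_of_continuousOn hc.lipschitzOnWith.continuousOn

theorem dist_le_two_mul_infDist (hc : IsGeodesicOn c 0 L) {q : X} {τ : ℝ} (hτ : τ ∈ Icc 0 L)
    (hq : dist q (c 0) - dist q (c L) = 2 * τ - L) :
    dist q (c τ) ≤ 2 * infDist q (c '' Icc 0 L) := by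
  obtain ⟨_, ⟨σ, hσ, rfl⟩, hσq⟩ :=
    hc.isCompact_image.exists_infDist_eq_dist ⟨c τ, τ, hτ, rfl⟩ q
  rw [hσq]
  exact hc.dist_le_two_mul_dist hσ hτ hq

theorem dist_endpoints (hc : IsGeodesicOn c 0 L) (hL : 0 ≤ L) : dist (c 0) (c L) = L := by
  rw [dist_comm, hc.dist_left ⟨hL, le_rfl⟩]

theorem exists_close_point_before {γ : ℝ → X} {H u τ₀ : ℝ} (hc : IsGeodesicOn c 0 L)
    (hγ : ContinuousOn γ (Icc 0 1)) (hγ₀ : γ 0 = c 0)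
    (hH : ∀ v ∈ Icc (0 : ℝ) 1, infDist (γ v) (c '' Icc 0 L) ≤ H) (hu : u ∈ Icc (0 : ℝ) 1)
    (hτ₀ : τ₀ ∈ Icc 0 L) (huτ₀ : dist (γ u) (c τ₀) ≤ H)
    (hHu : H ≤ infDist (γ u) (c '' Icc 0 L)) :
    ∃ v ∈ Icc 0 u, ∃ τ ∈ Icc 0 τ₀, τ₀ - τ ≤ 10 * H ∧ dist (γ v) (c τ) ≤ 2 * H ∧
      closedBall (c τ) (dist (γ v) (c τ)) ⊆ {ζ | H ≤ dist (γ u) ζ} := by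
  have hL : 0 ≤ L := hτ₀.1.trans hτ₀.2
  have hH₀ : 0 ≤ H := dist_nonneg.trans huτ₀
  by_cases hnear : τ₀ ≤ 10 * H
  · refine ⟨0, ⟨le_rfl, hu.1⟩, 0, ⟨le_rfl, hτ₀.1⟩, by linarith, ?_, ?_⟩
    · rw [hγ₀, dist_self]; positivity
    · rw [hγ₀, dist_self, closedBall_zero, singleton_subset_iff]
      exact hHu.trans (infDist_le_dist_of_mem ⟨0, ⟨le_rfl, hL⟩, rfl⟩)
  set τ := τ₀ - 10 * H with hτ
  have hτmem : τ ∈ Icc 0 L := ⟨by linarith, by linarith [hτ₀.2]⟩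
  set g := fun v => dist (γ v) (c 0) - dist (γ v) (c L)
  have hg : ContinuousOn g (Icc 0 u) :=
    (((continuous_id.dist continuous_const).comp_continuousOn hγ).sub
      ((continuous_id.dist continuous_const).comp_continuousOn hγ)).mono
      (Icc_subset_Icc le_rfl hu.2)
  have hg₀ : g 0 = -L := by simp [g, hγ₀, hc.dist_endpoints hL]
  have hgu : 2 * τ - L ≤ g u := by
    have h₀ := dist_triangle (c τ₀) (γ u) (c 0)
    have h₁ := dist_triangle (γ u) (c τ₀) (c L)
    rw [hc.dist_left hτ₀, dist_comm] at h₀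
    rw [hc.dist_right hτ₀] at h₁
    simp only [g]
    linarith
  obtain ⟨v, hv, hgv⟩ := intermediate_value_Icc hu.1 hg ⟨by linarith [hτmem.1], hgu⟩
  have hvτ : dist (γ v) (c τ) ≤ 2 * H :=
    (hc.dist_le_two_mul_infDist hτmem hgv).trans
      (by linarith [hH v ⟨hv.1, hv.2.trans hu.2⟩])
  refine ⟨v, hv, τ, ⟨hτmem.1, by linarith⟩, by linarith, hvτ, fun ζ hζ => ?_⟩
  have h₀ := dist_triangle (c τ₀) (γ u) (c τ)
  have h₁ := dist_triangle (γ u) ζ (c τ)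
  rw [hc τ₀ hτ₀ τ hτmem, abs_of_nonneg (by linarith), dist_comm] at h₀
  rw [mem_closedBall] at hζ
  show H ≤ dist (γ u) ζ
  linarith

theorem exists_close_point_after {γ : ℝ → X} {H u τ₀ : ℝ} (hc : IsGeodesicOn c 0 L)
    (hγ : ContinuousOn γ (Icc 0 1)) (hγ₁ : γ 1 = c L)
    (hH : ∀ v ∈ Icc (0 : ℝ) 1, infDist (γ v) (c '' Icc 0 L) ≤ H) (hu : u ∈ Icc (0 : ℝ) 1)
    (hτ₀ : τ₀ ∈ Icc 0 L) (huτ₀ : dist (γ u) (c τ₀) ≤ H)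
    (hHu : H ≤ infDist (γ u) (c '' Icc 0 L)) :
    ∃ v ∈ Icc u 1, ∃ τ ∈ Icc τ₀ L, τ - τ₀ ≤ 10 * H ∧ dist (c τ) (γ v) ≤ 2 * H ∧
      closedBall (c τ) (dist (c τ) (γ v)) ⊆ {ζ | H ≤ dist (γ u) ζ} := by
  have hrev : ∀ {a v : ℝ}, v ∈ Icc 0 a → a - v ∈ Icc 0 a := fun hv =>
    sub_mem_Icc_iff_right.2 (by simpa using hv)
  have hγ' : ContinuousOn (fun v => γ (1 - v)) (Icc 0 1) :=
    hγ.comp (continuousOn_const.sub continuousOn_id) fun _ hv => hrev hv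
  obtain ⟨v, hv, τ, hτ, hτw, hvτ, hfar⟩ := hc.reverse.exists_close_point_before hγ'
    (by simpa using hγ₁) (fun v hv => by rw [image_comp_const_sub_Icc]; exact hH _ (hrev hv))
    (hrev hu) (hrev hτ₀) (by simpa using huτ₀) (by simpa [image_comp_const_sub_Icc] using hHu)
  refine ⟨1 - v, sub_mem_Icc_iff_right.2 (by simpa using hv), L - τ,
    sub_mem_Icc_iff_right.2 (by simpa using hτ), by linarith, by rwa [dist_comm], ?_⟩
  simpa [dist_comm] using hfar

end IsGeodesicOn

structure IsThinPathFamily {X : Type*} [MetricSpace X] (η : X → X → ℝ → X) (D : ℝ) : Prop where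
  continuousOn : ∀ x y, ContinuousOn (η x y) (Icc 0 1)
  endpoints : ∀ x y, η x y 0 = x ∧ η x y 1 = y
  diam_le : ∀ x y, dist x y ≤ 1 → diam (η x y '' Icc 0 1) ≤ D
  hausdorffDist_le : ∀ x y s t, 0 ≤ s → s ≤ t → t ≤ 1 →
    hausdorffDist (η x y '' Icc s t) (η (η x y s) (η x y t) '' Icc 0 1) ≤ D
  infDist_le : ∀ x y z, ∀ p ∈ η x y '' Icc 0 1,
    infDist p (η x z '' Icc 0 1 ∪ η z y '' Icc 0 1) ≤ D

namespace IsThinPathFamily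
variable {X : Type*} [MetricSpace X] {η : X → X → ℝ → X} {D : ℝ}

theorem mono (hη : IsThinPathFamily η D) {D' : ℝ} (hD : D ≤ D') : IsThinPathFamily η D' where
  continuousOn := hη.continuousOn
  endpoints := hη.endpoints
  diam_le x y hxy := (hη.diam_le x y hxy).trans hD
  hausdorffDist_le x y s t hs hst ht := (hη.hausdorffDist_le x y s t hs hst ht).trans hD
  infDist_le x y z p hp := (hη.infDist_le x y z p hp).trans hD

theorem nonneg (hη : IsThinPathFamily η D) (x : X) : 0 ≤ D :=
  infDist_nonneg.trans (hη.infDist_le x x x x ⟨0, ⟨le_rfl, zero_le_one⟩, (hη.endpoints x x).1⟩)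

theorem isCompact_image (hη : IsThinPathFamily η D) (x y : X) {s t : ℝ} (hs : 0 ≤ s)
    (ht : t ≤ 1) : IsCompact (η x y '' Icc s t) :=
  isCompact_Icc.image_of_continuousOn ((hη.continuousOn x y).mono (Icc_subset_Icc hs ht))

theorem subset_closedBall (hη : IsThinPathFamily η D) {x y : X} (hxy : dist x y ≤ 1) :
    η x y '' Icc 0 1 ⊆ closedBall x D := fun _ hp =>
  (dist_le_diam_of_mem (hη.isCompact_image x y le_rfl le_rfl).isBounded hp
    ⟨0, ⟨le_rfl, zero_le_one⟩, (hη.endpoints x y).1⟩).trans (hη.diam_le x y hxy)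

theorem subset_cthickening_union (hη : IsThinPathFamily η D) (x y z : X) :
    η x y '' Icc 0 1 ⊆ cthickening D (η x z '' Icc 0 1 ∪ η z y '' Icc 0 1) := fun p hp =>
  have h := hη.infDist_le x y z p hp
  (mem_cthickening_iff_infDist_le (Nonempty.inl ((nonempty_Icc.2 zero_le_one).image _))
    (infDist_nonneg.trans h)).2 h

theorem image_Icc_subset_cthickening (hη : IsThinPathFamily η D) (x y : X) {s t : ℝ}
    (hs : 0 ≤ s) (hst : s ≤ t) (ht : t ≤ 1) :
    η x y '' Icc s t ⊆ cthickening D (η (η x y s) (η x y t) '' Icc 0 1) :=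
  subset_cthickening_of_hausdorffDist_le (hη.isCompact_image x y hs ht).isBounded
    (hη.isCompact_image _ _ le_rfl le_rfl).isBounded ((nonempty_Icc.2 zero_le_one).image _)
    (hη.hausdorffDist_le x y s t hs hst ht)

theorem subset_cthickening_of_lipschitzOnWith (hη : IsThinPathFamily η D) {f : ℝ → X}
    {s t : ℝ} (hf : LipschitzOnWith 1 f (Icc s t)) (hst : s ≤ t) (k : ℕ) (hk : t - s ≤ 2 ^ k) :
    η (f s) (f t) '' Icc 0 1 ⊆ cthickening (D * (k + 1)) (f '' Icc s t) := by
  induction k generalizing s t with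
  | zero =>
    have hdist : dist (f s) (f t) ≤ 1 := by
      have := hf.dist_le_mul s ⟨le_rfl, hst⟩ t ⟨hst, le_rfl⟩
      rw [NNReal.coe_one, one_mul, Real.dist_eq, abs_sub_comm,
        abs_of_nonneg (sub_nonneg.2 hst)] at this
      exact this.trans (by simpa using hk)
    simp only [CharP.cast_eq_zero, zero_add, mul_one]
    exact (hη.subset_closedBall hdist).trans <| (closedBall_subset_cthickening_singleton _ _).trans
      (cthickening_subset_of_subset _ (singleton_subset_iff.2 ⟨s, ⟨le_rfl, hst⟩, rfl⟩))
  | succ k ih =>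
    set m := (s + t) / 2 with hm
    have hsm : s ≤ m := by linarith
    have hmt : m ≤ t := by linarith
    have hD := hη.nonneg (f s)
    have hhalf : (t - s) / 2 ≤ 2 ^ k := by rw [pow_succ] at hk; linarith
    have hsplit : f '' Icc s m ∪ f '' Icc m t = f '' Icc s t := by
      rw [← image_union, Icc_union_Icc_eq_Icc hsm hmt]
    have key := subset_cthickening_union_of_subset hD (by positivity)
      (hη.subset_cthickening_union (f s) (f t) (f m))
      (ih (hf.mono (Icc_subset_Icc le_rfl hmt)) hsm (by linarith))
      (ih (hf.mono (Icc_subset_Icc hsm le_rfl)) hmt (by linarith))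
    rwa [hsplit, ← show D * (((k + 1 : ℕ) : ℝ) + 1) = D + D * (k + 1) by push_cast; ring] at key

theorem subset_cthickening_closedBall (hη : IsThinPathFamily η D) (hX : GeodesicSpace X)
    (x y : X) {k : ℕ} (hk : dist x y ≤ 2 ^ k) :
    η x y '' Icc 0 1 ⊆
      cthickening (D * (k + 1)) (closedBall x (dist x y) ∩ closedBall y (dist x y)) := by
  obtain ⟨c, hc0, hcL, hc⟩ := hX x y
  have h := hη.subset_cthickening_of_lipschitzOnWith hc.lipschitzOnWith dist_nonneg k
    (by simpa using hk)
  rw [hc0, hcL] at h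
  refine h.trans (cthickening_subset_of_subset _ ?_)
  rintro _ ⟨s, hs, rfl⟩
  have hx := hc.dist_left hs
  have hy := hc.dist_right hs
  rw [hc0] at hx
  rw [hcL] at hy
  exact ⟨hx.trans_le hs.2, hy.trans_le (by linarith [hs.1])⟩

theorem image_Icc_subset_cthickening_broken (hη : IsThinPathFamily η D) (hX : GeodesicSpace X)
    (x y : X) {s t : ℝ} (hs : 0 ≤ s) (hst : s ≤ t) (ht : t ≤ 1) {f : ℝ → X} {σ τ : ℝ}
    (hf : LipschitzOnWith 1 f (Icc σ τ)) (hστ : σ ≤ τ) {k : ℕ} (hk : τ - σ ≤ 2 ^ k)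
    (hs' : dist (η x y s) (f σ) ≤ 2 ^ k) (ht' : dist (f τ) (η x y t) ≤ 2 ^ k) :
    η x y '' Icc s t ⊆ cthickening (D * (k + 4))
      (closedBall (f σ) (dist (η x y s) (f σ)) ∪ f '' Icc σ τ ∪
        closedBall (f τ) (dist (f τ) (η x y t))) := by
  have hD := hη.nonneg x
  have hk₀ : 0 ≤ D * (k + 1) := by positivity
  have hfirst := subset_cthickening_union_of_subset hD hk₀
    (hη.subset_cthickening_union (η x y s) (f τ) (f σ))
    ((hη.subset_cthickening_closedBall hX _ _ hs').trans
      (cthickening_subset_of_subset _ inter_subset_right))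
    (hη.subset_cthickening_of_lipschitzOnWith hf hστ k hk)
  have hlast := (hη.subset_cthickening_closedBall hX _ _ ht').trans <|
    (cthickening_subset_of_subset _ inter_subset_left).trans
      (cthickening_mono (le_add_of_nonneg_left hD) _)
  have hall := subset_cthickening_union_of_subset hD (by positivity)
    (hη.subset_cthickening_union (η x y s) (η x y t) (f τ)) hfirst hlast
  refine (hη.image_Icc_subset_cthickening x y hs hst ht).trans <|
    (cthickening_subset_of_subset _ hall).trans <|
      (cthickening_cthickening_subset hD (by positivity) _).trans (cthickening_mono ?_ _)
  linarith

theorem subset_cthickening_geodesic (hη : IsThinPathFamily η D) (hD : 1 ≤ D)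
    (hX : GeodesicSpace X) {c : ℝ → X} {L : ℝ} (hc : IsGeodesicOn c 0 L) (hL : 0 ≤ L) :
    η (c 0) (c L) '' Icc 0 1 ⊆ cthickening (720 * D ^ 2) (c '' Icc 0 L) := by
  set G := c '' Icc 0 L
  set γ := η (c 0) (c L)
  have hG : G.Nonempty := ⟨c 0, 0, ⟨le_rfl, hL⟩, rfl⟩
  obtain ⟨u, hu, hmax⟩ := isCompact_Icc.exists_isMaxOn (nonempty_Icc.2 zero_le_one)
    ((continuous_infDist_pt G).comp_continuousOn (hη.continuousOn (c 0) (c L)))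
  set H := infDist (γ u) G
  have hH : ∀ v ∈ Icc (0 : ℝ) 1, infDist (γ v) G ≤ H := fun v hv => hmax hv
  obtain ⟨_, ⟨τ₀, hτ₀, rfl⟩, huτ₀⟩ := hc.isCompact_image.exists_infDist_eq_dist hG (γ u)
  obtain ⟨s, hs, σ, hσ, hσw, hsσ, hsfar⟩ := hc.exists_close_point_before
    (hη.continuousOn _ _) (hη.endpoints _ _).1 hH hu hτ₀ huτ₀.symm.le le_rfl
  obtain ⟨t, ht, τ, hτ, hτw, htτ, htfar⟩ := hc.exists_close_point_after
    (hη.continuousOn _ _) (hη.endpoints _ _).2 hH hu hτ₀ huτ₀.symm.le le_rfl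
  have hbound : ∀ k : ℕ, 20 * H ≤ 2 ^ k → H ≤ D * (k + 4) := by
    intro k hk
    have hH₀ : 0 ≤ H := infDist_nonneg
    have hbroken := hη.image_Icc_subset_cthickening_broken hX (c 0) (c L) hs.1
      (hs.2.trans ht.1) ht.2 (hc.lipschitzOnWith.mono (Icc_subset_Icc hσ.1 hτ.2))
      (hσ.2.trans hτ.1) (by linarith) (by linarith) (by linarith) ⟨u, ⟨hs.2, ht.1⟩, rfl⟩
    have hT : (closedBall (c σ) (dist (γ s) (c σ)) ∪ c '' Icc σ τ ∪
        closedBall (c τ) (dist (c τ) (γ t))).Nonempty :=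
      ⟨c σ, .inl (.inr ⟨σ, ⟨le_rfl, hσ.2.trans hτ.1⟩, rfl⟩)⟩
    refine le_trans ((le_infDist hT).2 ?_)
      ((mem_cthickening_iff_infDist_le hT (by positivity)).1 hbroken)
    rintro ζ ((hζ | ⟨ρ, hρ, rfl⟩) | hζ)
    · exact hsfar hζ
    · exact infDist_le_dist_of_mem ⟨ρ, ⟨hσ.1.trans hρ.1, hρ.2.trans hτ.2⟩, rfl⟩
    · exact htfar hζ
  rintro _ ⟨v, hv, rfl⟩
  exact (mem_cthickening_iff_infDist_le hG (by positivity)).2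
    ((hH v hv).trans (le_mul_sq_of_forall_two_pow hD hbound))

theorem geodesic_subset_cthickening (hη : IsThinPathFamily η D) (hD : 1 ≤ D)
    (hX : GeodesicSpace X) {c : ℝ → X} {L : ℝ} (hc : IsGeodesicOn c 0 L) (hL : 0 ≤ L) :
    c '' Icc 0 L ⊆ cthickening (2 * (720 * D ^ 2)) (η (c 0) (c L) '' Icc 0 1) := by
  rintro _ ⟨τ, hτ, rfl⟩
  set γ := η (c 0) (c L)
  set g := fun v => dist (γ v) (c 0) - dist (γ v) (c L)
  have hg : ContinuousOn g (Icc 0 1) :=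
    ((continuous_id.dist continuous_const).comp_continuousOn (hη.continuousOn _ _)).sub
      ((continuous_id.dist continuous_const).comp_continuousOn (hη.continuousOn _ _))
  have hg₀ : g 0 = -L := by simp [g, γ, (hη.endpoints _ _).1, hc.dist_endpoints hL]
  have hg₁ : g 1 = L := by
    simp [g, γ, (hη.endpoints _ _).2, hc.dist_left ⟨hL, le_rfl⟩]
  obtain ⟨v, hv, hgv⟩ := intermediate_value_Icc zero_le_one hg
    (show 2 * τ - L ∈ Icc (g 0) (g 1) by rw [hg₀, hg₁]; constructor <;> linarith [hτ.1, hτ.2])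
  have hvG := (mem_cthickening_iff_infDist_le ((nonempty_Icc.2 hL).image c) (by positivity)).1
    (hη.subset_cthickening_geodesic hD hX hc hL ⟨v, hv, rfl⟩)
  refine mem_cthickening_of_dist_le _ (γ v) _ _ ⟨v, hv, rfl⟩ ?_
  rw [dist_comm]
  exact (hc.dist_le_two_mul_infDist hτ hgv).trans (by linarith)

theorem thinTriangles (hη : IsThinPathFamily η D) (hD : 1 ≤ D) (hX : GeodesicSpace X) :
    ThinTriangles X (3 * (720 * D ^ 2) + D) := by
  have hside : ∀ {x y : X} {g : ℝ → X}, g 0 = y → g (dist y x) = x →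
      IsGeodesicOn g 0 (dist y x) →
      η x y '' Icc 0 1 ⊆ cthickening (720 * D ^ 2) (g '' Icc 0 (dist y x)) := by
    intro x y g hg₀ hg₁ hg
    simpa [hg₀, hg₁, image_comp_const_sub_Icc] using
      hη.subset_cthickening_geodesic hD hX hg.reverse dist_nonneg
  intro x y z a b c ⟨ha₀, ha₁, ha⟩ ⟨hb₀, hb₁, hb⟩ ⟨hc₀, hc₁, hc⟩ p hp
  have hxy := hη.geodesic_subset_cthickening hD hX hc dist_nonneg
  rw [hc₀, hc₁] at hxy
  have hpath := subset_cthickening_union_of_subset (hη.nonneg x) (by positivity)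
    (hη.subset_cthickening_union x y z) (hside hb₀ hb₁ hb)
    (hside ha₀ ha₁ ha)
  have hp' := (cthickening_cthickening_subset (by positivity) (by positivity) _)
    ((cthickening_subset_of_subset _ hpath) (hxy hp))
  rw [union_comm] at hp'
  exact ((mem_cthickening_iff_infDist_le (Nonempty.inl ((nonempty_Icc.2 dist_nonneg).image a))
    (by positivity)).1 hp').trans (by linarith)

end IsThinPathFamily

theorem curve_family_implies_hyperbolic.{u} :
    ∀ D : ℝ, 0 < D → ∃ δ : ℝ, 0 < δ ∧
      ∀ (X : Type u) [MetricSpace X], GeodesicSpace X →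
      ∀ η : X → X → ℝ → X,
        (∀ x y : X, ContinuousOn (η x y) (Set.Icc 0 1)) →
        (∀ x y : X, η x y 0 = x ∧ η x y 1 = y) →
        -- (1) short distance implies bounded diameter
        (∀ x y : X, dist x y ≤ 1 → Metric.diam (η x y '' Set.Icc 0 1) ≤ D) →
        -- (2) stability under restriction
        (∀ x y : X, ∀ s t : ℝ, 0 ≤ s → s ≤ t → t ≤ 1 →
          Metric.hausdorffDist (η x y '' Set.Icc s t)
            (η (η x y s) (η x y t) '' Set.Icc (0:ℝ) 1) ≤ D) →
        -- (3) thinness of η-triangles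
        (∀ x y z : X, ∀ p ∈ η x y '' Set.Icc (0:ℝ) 1,
          Metric.infDist p
            ((η x z '' Set.Icc (0:ℝ) 1) ∪ (η z y '' Set.Icc (0:ℝ) 1)) ≤ D) →
        ThinTriangles X δ := by
  intro D _
  refine ⟨3 * (720 * max D 1 ^ 2) + max D 1, by positivity, ?_⟩
  intro X _ hX η hcont hend hdiam hhaus hthin
  have hη : IsThinPathFamily η D := ⟨hcont, hend, hdiam, hhaus, hthin⟩
  exact (hη.mono (le_max_left D 1)).thinTriangles (le_max_right D 1) hX
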